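/- arXiv:quant-ph/0312209 — 2 statements merged into one kernel-verified Lean document; each statement's English description precedes it below -/
import Mathlib

section
/- Acceptance probability of the teleported circuit: let ψ ∈ ℂ² with ∑|ψ|² = 1, and let U, V be unitary 2×2 complex matrices. Starting from ψ ⊗ EPR on qubits (1,2,3), apply U to qubit 1, then B† to qubits (1,2), then V to qubit 3; call the resulting state Φ. Then the probability of measuring outcome (0,0,0), namely |Φ(0,0,0)|², equals (1/4)·|(V·U·ψ)(0)|², i.e., exactly 1/4 times the probability that the original circuit V·U applied to ψ yields outcome 0. -/
open Matrix Kronecker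

noncomputable def Hgate : Matrix (Fin 2) (Fin 2) ℂ :=
  ((1 / Real.sqrt 2 : ℝ) : ℂ) • !![1, 1; 1, -1]

/-- The CNOT gate: `CNOT(|a⟩⊗|b⟩) = |a⟩⊗|a⊕b⟩`. -/
def CNOT : Matrix (Fin 2 × Fin 2) (Fin 2 × Fin 2) ℂ :=
  fun p q => if p = (q.1, q.1 + q.2) then 1 else 0

/-- The Bell gate `B = CNOT * (H ⊗ I₂)`. -/
noncomputable def Bgate : Matrix (Fin 2 × Fin 2) (Fin 2 × Fin 2) ℂ :=
  CNOT * (Hgate ⊗ₖ (1 : Matrix (Fin 2) (Fin 2) ℂ))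

/-- `B†`, the conjugate transpose of the Bell gate. -/
noncomputable def Bdag : Matrix (Fin 2 × Fin 2) (Fin 2 × Fin 2) ℂ := Bgateᴴ

/-- The computational basis state `|a⟩` of one qubit. -/
def ket (a : Fin 2) : Fin 2 → ℂ := fun i => if i = a then 1 else 0

/-- The EPR state `B(|0⟩⊗|0⟩) = (|00⟩+|11⟩)/√2`. -/
noncomputable def EPR : Fin 2 × Fin 2 → ℂ :=
  Bgate.mulVec fun p => ket 0 p.1 * ket 0 p.2

/-- The initial state `ψ ⊗ EPR` on qubits `(1,2,3)`. -/
noncomputable def step0 (ψ : Fin 2 → ℂ) : Fin 2 × Fin 2 × Fin 2 → ℂ :=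
  fun x => ψ x.1 * EPR (x.2.1, x.2.2)

/-- Apply `U` to qubit 1. -/
noncomputable def step1 (U : Matrix (Fin 2) (Fin 2) ℂ) (ψ : Fin 2 → ℂ) :
    Fin 2 × Fin 2 × Fin 2 → ℂ :=
  fun x => ∑ q : Fin 2, U x.1 q * step0 ψ (q, x.2.1, x.2.2)

/-- Then apply `B†` to qubits `(1,2)`. -/
noncomputable def step2 (U : Matrix (Fin 2) (Fin 2) ℂ) (ψ : Fin 2 → ℂ) :
    Fin 2 × Fin 2 × Fin 2 → ℂ :=
  fun x => ∑ y : Fin 2 × Fin 2, Bdag (x.1, x.2.1) y * step1 U ψ (y.1, y.2, x.2.2)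

/-- Finally apply `V` to qubit 3; this is the resulting state `Φ`. -/
noncomputable def step3 (V U : Matrix (Fin 2) (Fin 2) ℂ) (ψ : Fin 2 → ℂ) :
    Fin 2 × Fin 2 × Fin 2 → ℂ :=
  fun x => ∑ c : Fin 2, V x.2.2 c * step2 U ψ (x.1, x.2.1, c)

/-!
The row `(0,0)` of `B†` is the conjugate of the EPR state `B|00⟩`, so it projects qubits
`(1,2)` onto `|Φ⁺⟩`. For any one-qubit state `φ`, `⟨Φ⁺|₁₂ (φ₁ ⊗ |Φ⁺⟩₂₃) = φ₃ / 2`: this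
post-selected teleportation moves `Uψ` to qubit 3 with amplitude `1/2`, and `V`, acting on
qubit 3 only, commutes with the projection.
-/

local notation "ω" => ((1 / Real.sqrt 2 : ℝ) : ℂ)

lemma ω_mul_ω : ω * ω = 1 / 2 := by
  rw [← Complex.ofReal_mul, div_mul_div_comm, one_mul, Real.mul_self_sqrt zero_le_two]
  norm_num

lemma EPR_apply (a b : Fin 2) : EPR (a, b) = if a = b then ω else 0 := by
  fin_cases a <;> fin_cases b <;>
    simp [EPR, Bgate, CNOT, Hgate, ket, mulVec, dotProduct, Matrix.mul_apply,
      Fintype.sum_prod_type, Fin.sum_univ_two, Matrix.one_apply]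

lemma EPR_eq_Bgate_apply_zero (y : Fin 2 × Fin 2) : EPR y = Bgate y (0, 0) := by
  have : (fun p : Fin 2 × Fin 2 => ket 0 p.1 * ket 0 p.2) = Pi.single (0, 0) 1 := by
    ext ⟨a, b⟩
    fin_cases a <;> fin_cases b <;> simp [ket]
  rw [EPR, this, mulVec_single_one]; rfl

lemma Bdag_zero_zero_apply (a b : Fin 2) : Bdag (0, 0) (a, b) = if a = b then ω else 0 := by
  rw [Bdag, conjTranspose_apply, ← EPR_eq_Bgate_apply_zero, EPR_apply]
  split_ifs <;> simp [Complex.conj_ofReal]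

lemma step1_apply (U : Matrix (Fin 2) (Fin 2) ℂ) (ψ : Fin 2 → ℂ) (x : Fin 2 × Fin 2 × Fin 2) :
    step1 U ψ x = (U *ᵥ ψ) x.1 * EPR (x.2.1, x.2.2) := by
  simp only [step1, step0, mulVec, dotProduct, Finset.sum_mul, mul_assoc]

lemma step2_apply_zero_zero (U : Matrix (Fin 2) (Fin 2) ℂ) (ψ : Fin 2 → ℂ) (c : Fin 2) :
    step2 U ψ (0, 0, c) = 1 / 2 * (U *ᵥ ψ) c := by
  simp only [step2, step1_apply, Fintype.sum_prod_type, Bdag_zero_zero_apply, EPR_apply]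
  generalize U *ᵥ ψ = φ
  simp only [ite_mul, zero_mul, mul_ite, mul_zero, Finset.sum_ite_eq',
    Finset.mem_univ, if_true]
  linear_combination φ c * ω_mul_ω

lemma step3_apply_zero_zero (V U : Matrix (Fin 2) (Fin 2) ℂ) (ψ : Fin 2 → ℂ) (c : Fin 2) :
    step3 V U ψ (0, 0, c) = 1 / 2 * ((V * U) *ᵥ ψ) c := by
  rw [← mulVec_mulVec, mulVec, dotProduct, Finset.mul_sum]
  simp only [step3, step2_apply_zero_zero, mul_left_comm]

theorem teleported_acceptance_prob_general (ψ : Fin 2 → ℂ)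
    (U V : Matrix (Fin 2) (Fin 2) ℂ) :
    ‖step3 V U ψ (0, 0, 0)‖ ^ 2 = (1 / 4 : ℝ) * ‖(V * U).mulVec ψ 0‖ ^ 2 := by
  rw [step3_apply_zero_zero, norm_mul, mul_pow]
  norm_num

/-- Acceptance probability of the teleported circuit: the probability of measuring
outcome `(0,0,0)` in the state `Φ` equals exactly `1/4` times the probability that
the original circuit `V·U` applied to `ψ` yields outcome `0`. -/
theorem teleported_acceptance_prob (ψ : Fin 2 → ℂ)
    (hψ : ∑ q : Fin 2, ‖ψ q‖ ^ 2 = 1)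
    (U V : Matrix (Fin 2) (Fin 2) ℂ)
    (hU : U ∈ Matrix.unitaryGroup (Fin 2) ℂ)
    (hV : V ∈ Matrix.unitaryGroup (Fin 2) ℂ) :
    ‖step3 V U ψ (0, 0, 0)‖ ^ 2 = (1 / 4 : ℝ) * ‖(V * U).mulVec ψ 0‖ ^ 2 :=
  teleported_acceptance_prob_general ψ U V
end

section
/- Parallel teleportation of k qubits: let α be a finite type, k ∈ ℕ, and Ψ : α × (Fin k → Fin 2) → ℂ a joint state of an ancilla register A and qubits q₁,…,q_k. Attach k fresh EPR pairs (r₁ᵢ, r₂ᵢ) for i = 1,…,k and apply B† to each pair (qᵢ, r₁ᵢ) (identity elsewhere); call the result Φ. Then the component of Φ in which every pair (qᵢ, r₁ᵢ) is in state (0,0), regarded as a vector on α × (Fin k → Fin 2) via the qubits r₂ᵢ, equals 2^{−k}·Ψ. -/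
open Matrix Kronecker

/-- The state obtained from `Ψ ⊗ EPR^{⊗k}` (the `i`-th EPR pair occupying fresh
qubits `r₁ᵢ, r₂ᵢ`) by applying `B†` to each pair `(qᵢ, r₁ᵢ)` and the identity
elsewhere.  Coordinates are `(a, q, r₁, r₂)`. -/
noncomputable def parallelTeleported {α : Type*} [Fintype α] (k : ℕ)
    (Ψ : α × (Fin k → Fin 2) → ℂ) :
    α × (Fin k → Fin 2) × (Fin k → Fin 2) × (Fin k → Fin 2) → ℂ :=
  fun x => ∑ q' : Fin k → Fin 2, ∑ r' : Fin k → Fin 2,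
    (∏ i, Bdag (x.2.1 i, x.2.2.1 i) (q' i, r' i)) *
      (Ψ (x.1, q') * ∏ i, EPR (r' i, x.2.2.2 i))

/-!
Both `EPR` and the `(0,0)` row of `B†` are `(1/√2)·δ_{qr}`, so every factor of the parallel
circuit is a scaled Kronecker delta. The sum over the intermediate qubits then collapses to the
single term `q' = r' = r₂`, leaving `(1/√2)^{2k} · Ψ = 2^{-k} · Ψ`.
-/

lemma Fintype.prod_ite_apply_eq {ι β M : Type*} [Fintype ι] [DecidableEq β] [CommMonoidWithZero M]
    (f g : ι → β) (c : M) :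
    ∏ i, (if f i = g i then c else 0) = if f = g then c ^ Fintype.card ι else 0 := by
  by_cases h : f = g
  · simp [h]
  · obtain ⟨i, hi⟩ := Function.ne_iff.mp h
    rw [if_neg h]
    exact Finset.prod_eq_zero (Finset.mem_univ i) (if_neg hi)

lemma EPR_apply_s8 (q r : Fin 2) :
    EPR (q, r) = if q = r then ((Real.sqrt 2 : ℝ) : ℂ)⁻¹ else 0 := by
  fin_cases q <;> fin_cases r <;>
    simp [EPR, Bgate, CNOT, Hgate, Matrix.mulVec, Matrix.mul_apply, dotProduct,
      Fintype.sum_prod_type, Fin.sum_univ_two, ket, Matrix.one_apply]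

lemma EPR_eq_Bgate_apply (x : Fin 2 × Fin 2) : EPR x = Bgate x (0, 0) := by
  simp [EPR, Matrix.mulVec, dotProduct, Fintype.sum_prod_type, ket]

lemma Bdag_zero_zero_apply_s8 (q r : Fin 2) : Bdag (0, 0) (q, r) = EPR (q, r) := by
  rw [Bdag, conjTranspose_apply, ← EPR_eq_Bgate_apply, EPR_apply_s8]
  split_ifs <;> simp

lemma inv_sqrt_two_pow_mul_self (k : ℕ) :
    (((Real.sqrt 2 : ℝ) : ℂ)⁻¹) ^ k * (((Real.sqrt 2 : ℝ) : ℂ)⁻¹) ^ k = ((2 : ℂ) ^ k)⁻¹ := by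
  rw [← mul_pow, ← mul_inv, ← Complex.ofReal_mul, Real.mul_self_sqrt zero_le_two, inv_pow]
  norm_num

/-- Parallel teleportation of `k` qubits: the component of the teleported state in
which every pair `(qᵢ, r₁ᵢ)` is in state `(0,0)`, regarded as a joint state of the
ancilla register and the qubits `r₂ᵢ`, equals `2^{−k}·Ψ`. -/
theorem parallel_postselected_teleportation {α : Type*} [Fintype α] (k : ℕ)
    (Ψ : α × (Fin k → Fin 2) → ℂ) :
    (fun p : α × (Fin k → Fin 2) =>
        parallelTeleported k Ψ (p.1, fun _ => 0, fun _ => 0, p.2))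
      = ((2 : ℂ) ^ k)⁻¹ • Ψ := by
  funext ⟨a, r₂⟩
  simp only [parallelTeleported, Bdag_zero_zero_apply_s8, EPR_apply_s8, Fintype.prod_ite_apply_eq,
    Fintype.card_fin, Pi.smul_apply, smul_eq_mul]
  simp only [ite_mul, zero_mul, mul_ite, mul_zero, Finset.sum_ite_eq',
    Finset.mem_univ, if_true]
  rw [← inv_sqrt_two_pow_mul_self]
  ring
end
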